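/- (Ellis) Every locally compact Hausdorff semitopological group is a topological group (i.e. multiplication is jointly continuous and inversion is continuous). -/

import Mathlib

/-!
The heart of the proof is a Namioka-type lemma: if `X` is locally compact regular, `Y` compact and
`f : X → Y → Z` separately continuous, every nonempty open set of `X` contains a point `a` such that
`f` oscillates by at most `ε` near every point of `{a} × Y`. Otherwise take a minimal closed set `S`
of `ε`-oscillation points projecting onto a compact `closure U₁`. Minimality lets one shrink any box
meeting `S` to a nonempty open `O` whose `S`-fibres all lie in a prescribed open set; iterating
gives points `p n`, `y n`, `q n` with `f x (q n)` and `f x (y n)` at least `ε / 4` apart at all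
later `x = p m`, while `f (p n)` varies by at most `ε / 5` on all later boxes. At a cluster point of
`(p n, q n, y n)` the two bounds contradict each other.

For the group apply this to `(x, y) ↦ h (x * y)` on `G × OnePoint G`, with `h` a compactly supported
Urysohn function equal to `1` at `1` and vanishing off a neighbourhood `W` of `1`. Small oscillation
at `(a, a⁻¹)` gives neighbourhoods `A` of `a` and `B` of `a⁻¹` with `A * B ⊆ W`, which is joint
continuity of multiplication at `(1, 1)` after translating. Small oscillation at `(a, ∞)` keeps
`x⁻¹` in a compact set for `x` near `a`, and then the closed graph of inversion forces its
continuity.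
-/

open Set Filter Topology Function Pointwise

theorem MapClusterPt.rel_of_forall_lt {α β : Type*} [TopologicalSpace α] [TopologicalSpace β]
    {u : ℕ → α} {v : ℕ → β} {a : α} {b : β}
    (h : MapClusterPt (a, b) atTop fun n => (u n, v n)) {R : α → β → Prop}
    (hR₁ : ∀ b', IsClosed {a' | R a' b'}) (hR₂ : ∀ a', IsClosed {b' | R a' b'})
    (hR : ∀ n m, n < m → R (u m) (v n)) : R a b := by
  have hu : MapClusterPt a atTop u := h.continuousAt_comp continuous_fst.continuousAt
  have hv : MapClusterPt b atTop v := h.continuousAt_comp continuous_snd.continuousAt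
  have hav : ∀ n, R a (v n) := fun n =>
    (hR₁ (v n)).mem_of_mapClusterPt hu ((eventually_gt_atTop n).mono (hR n))
  exact (hR₂ a).mem_of_mapClusterPt hv (.of_forall hav)

section Oscillation

variable {P Z : Type*} [TopologicalSpace P] [PseudoMetricSpace Z]

def OscillatesAbove (F : P → Z) (ε : ℝ) (p : P) : Prop :=
  ∀ s ∈ 𝓝 p, ∃ a ∈ s, ∃ b ∈ s, ε < dist (F a) (F b)

theorem isClosed_setOf_oscillatesAbove (F : P → Z) (ε : ℝ) :
    IsClosed {p | OscillatesAbove F ε p} := by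
  refine isOpen_compl_iff.1 (isOpen_iff_mem_nhds.2 fun p hp => ?_)
  simp only [mem_compl_iff, mem_ofPred_eq, OscillatesAbove] at hp
  push Not at hp
  obtain ⟨s, hs, hsmall⟩ := hp
  filter_upwards [eventually_mem_nhds_iff.2 hs] with q hq hosc
  obtain ⟨a, ha, b, hb, hab⟩ := hosc s hq
  exact (hsmall a ha b hb).not_gt hab

theorem exists_nhds_dist_le_of_not_oscillatesAbove {X Y : Type*} [TopologicalSpace X]
    [TopologicalSpace Y] {f : X → Y → Z} {ε : ℝ} {a : X} {b : Y}
    (h : ¬OscillatesAbove (uncurry f) ε (a, b)) :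
    ∃ A ∈ 𝓝 a, ∃ B ∈ 𝓝 b, ∀ x ∈ A, ∀ y ∈ B, dist (f x y) (f a b) ≤ ε := by
  simp only [OscillatesAbove] at h
  push Not at h
  obtain ⟨s, hs, hsmall⟩ := h
  obtain ⟨A, hA, B, hB, hAB⟩ := mem_nhds_prod_iff.1 hs
  exact ⟨A, hA, B, hB, fun x hx y hy =>
    hsmall (x, y) (hAB ⟨hx, hy⟩) (a, b) (hAB ⟨mem_of_mem_nhds hA, mem_of_mem_nhds hB⟩)⟩

end Oscillation

section ClosedSubsetsOfProducts

variable {X Y : Type*} [TopologicalSpace X] [TopologicalSpace Y]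

theorem Minimal.exists_fiber_subset {Q : Set X} {S : Set (X × Y)}
    (hS : Minimal (fun T => IsClosed T ∧ Q ⊆ Prod.fst '' T) S) {U : Set X} {V : Set Y}
    (hU : IsOpen U) (hV : IsOpen V) (hSUV : (S ∩ U ×ˢ V).Nonempty) :
    ∃ x ∈ Q ∩ U, Prod.mk x ⁻¹' S ⊆ V := by
  by_contra! h
  suffices S ⊆ S \ U ×ˢ V by
    obtain ⟨p, hpS, hpUV⟩ := hSUV
    exact (this hpS).2 hpUV
  refine hS.2 ⟨hS.1.1.sdiff (hU.prod hV), fun x hx => ?_⟩ sdiff_subset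
  by_cases hxU : x ∈ U
  · obtain ⟨y, hyS, hyV⟩ := not_subset.1 (h x ⟨hx, hxU⟩)
    exact ⟨(x, y), ⟨hyS, fun hxy => hyV hxy.2⟩, rfl⟩
  · obtain ⟨p, hpS, rfl⟩ := hS.1.2 hx
    exact ⟨p, ⟨hpS, fun hp => hxU hp.1⟩, rfl⟩

variable [CompactSpace Y]

theorem IsClosed.isOpen_setOf_fiber_subset {S : Set (X × Y)} (hS : IsClosed S) {V : Set Y}
    (hV : IsOpen V) : IsOpen {x | Prod.mk x ⁻¹' S ⊆ V} := by
  have : {x | Prod.mk x ⁻¹' S ⊆ V}ᶜ = Prod.fst '' (S ∩ univ ×ˢ Vᶜ) := by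
    ext x
    simp [not_subset]
  exact isClosed_compl_iff.1 (this ▸ isClosedMap_fst_of_compactSpace _
    (hS.inter (isClosed_univ.prod hV.isClosed_compl)))

theorem IsClosed.exists_minimal_subset_of_subset_image_fst {S : Set (X × Y)} (hS : IsClosed S)
    {Q : Set X} (hQ : Q ⊆ Prod.fst '' S) :
    ∃ T ⊆ S, Minimal (fun T => IsClosed T ∧ Q ⊆ Prod.fst '' T) T := by
  refine (zorn_superset_nonempty {T | T ⊆ S ∧ IsClosed T ∧ Q ⊆ Prod.fst '' T} ?_ S
    ⟨subset_rfl, hS, hQ⟩).imp fun T ⟨hTS, hT⟩ =>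
      ⟨hTS, hT.1.2, fun T' hT' hT'T => hT.2 ⟨hT'T.trans hTS, hT'⟩ hT'T⟩
  intro c hc hchain ⟨T₀, hT₀⟩
  refine ⟨⋂₀ c, ⟨(sInter_subset_of_mem hT₀).trans (hc hT₀).1,
    isClosed_sInter fun T hT => (hc hT).2.1, fun x hx => ?_⟩, fun T hT => sInter_subset_of_mem hT⟩
  have : Nonempty c := ⟨⟨T₀, hT₀⟩⟩
  have hfiber : ∀ T ∈ c, IsClosed (Prod.mk x ⁻¹' T) := fun T hT =>
    (hc hT).2.1.preimage (Continuous.prodMk_right x)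
  have hne : ∀ T ∈ c, (Prod.mk x ⁻¹' T).Nonempty := fun T hT => by
    obtain ⟨p, hp, rfl⟩ := (hc hT).2.2 hx
    exact ⟨p.2, hp⟩
  obtain ⟨y, hy⟩ := IsCompact.nonempty_iInter_of_directed_nonempty_isCompact_isClosed
    (fun T : c => Prod.mk x ⁻¹' (T : Set (X × Y)))
    (fun T₁ T₂ => (hchain.total T₁.2 T₂.2).elim (fun h => ⟨T₁, subset_rfl, preimage_mono h⟩)
      fun h => ⟨T₂, preimage_mono h, subset_rfl⟩)
    (fun T => hne T T.2) (fun T => (hfiber T T.2).isCompact) (fun T => hfiber T T.2)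
  exact ⟨(x, y), mem_sInter.2 fun T hT => mem_iInter.1 hy ⟨T, hT⟩, rfl⟩

theorem Minimal.exists_isOpen_fiber_subset {U₁ : Set X} {S : Set (X × Y)}
    (hS : Minimal (fun T => IsClosed T ∧ closure U₁ ⊆ Prod.fst '' T) S) (hU₁ : IsOpen U₁)
    {U : Set X} {V : Set Y} (hU : IsOpen U) (hV : IsOpen V) (hSUV : (S ∩ U ×ˢ V).Nonempty) :
    ∃ O, IsOpen O ∧ O.Nonempty ∧ O ⊆ U ∩ U₁ ∧ ∀ x ∈ O, Prod.mk x ⁻¹' S ⊆ V := by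
  obtain ⟨x, ⟨hxQ, hxU⟩, hxV⟩ := hS.exists_fiber_subset hU hV hSUV
  have hO : IsOpen ({x | Prod.mk x ⁻¹' S ⊆ V} ∩ U) :=
    (hS.1.1.isOpen_setOf_fiber_subset hV).inter hU
  refine ⟨{x | Prod.mk x ⁻¹' S ⊆ V} ∩ U ∩ U₁, hO.inter hU₁, mem_closure_iff.1 hxQ _ hO ⟨hxV, hxU⟩,
    fun x hx => ⟨hx.1.2, hx.2⟩, fun x hx => hx.1.1⟩

end ClosedSubsetsOfProducts

section Namioka

variable {X Y Z : Type*} [TopologicalSpace X] [TopologicalSpace Y] [PseudoMetricSpace Z]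
  {f : X → Y → Z}

theorem OscillatesAbove.exists_eventually_lt_dist (hfx : ∀ y, Continuous (f · y)) {ε : ℝ}
    (hε : 0 < ε) {x₀ : X} {y₀ : Y} (h : OscillatesAbove (uncurry f) ε (x₀, y₀)) {W : Set X}
    {V : Set Y} (hW : W ∈ 𝓝 x₀) (hV : V ∈ 𝓝 y₀) :
    ∃ p ∈ W, ∃ q ∈ V, ∀ᶠ x in 𝓝 p, ε / 4 < dist (f x q) (f x y₀) := by
  set W₀ := {x | dist (f x y₀) (f x₀ y₀) < ε / 8}
  have hW₀ : IsOpen W₀ := isOpen_lt ((hfx y₀).dist continuous_const) continuous_const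
  have hx₀ : x₀ ∈ W₀ := by simp only [W₀, mem_ofPred_eq, dist_self]; positivity
  obtain ⟨⟨x₁, y₁⟩, h₁, ⟨x₂, y₂⟩, h₂, hdist⟩ :=
    h _ (prod_mem_nhds (inter_mem hW (hW₀.mem_nhds hx₀)) hV)
  obtain ⟨p, q, ⟨hpW, hpW₀⟩, hqV, hpq⟩ :
      ∃ p q, p ∈ W ∩ W₀ ∧ q ∈ V ∧ ε / 2 < dist (f p q) (f x₀ y₀) := by
    by_contra! hsmall
    linarith [hsmall x₁ y₁ h₁.1 h₁.2, hsmall x₂ y₂ h₂.1 h₂.2,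
      dist_triangle_right (f x₁ y₁) (f x₂ y₂) (f x₀ y₀),
      show ε < dist (f x₁ y₁) (f x₂ y₂) from hdist]
  refine ⟨p, hpW, q, hqV, ?_⟩
  filter_upwards [Metric.tendsto_nhds.1 ((hfx q).tendsto p) (ε / 8) (by positivity),
    hW₀.mem_nhds hpW₀] with x hxq hxy
  linarith [dist_triangle4 (f p q) (f x q) (f x y₀) (f x₀ y₀), dist_comm (f p q) (f x q),
    show dist (f x y₀) (f x₀ y₀) < ε / 8 from hxy]

theorem le_of_interleaved_dist_bounds [CompactSpace Y] (hfx : ∀ y, Continuous (f · y))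
    (hfy : ∀ x, Continuous (f x)) {K : Set X} (hK : IsCompact K) {p : ℕ → X} {y q : ℕ → Y}
    (hp : ∀ n, p n ∈ K) {r s : ℝ}
    (hsep : ∀ n m, n < m → r ≤ dist (f (p m) (q n)) (f (p m) (y n)))
    (hosc : ∀ n m, n < m → dist (f (p n) (q m)) (f (p n) (y m)) ≤ s) : r ≤ s := by
  obtain ⟨⟨a, b, c⟩, -, hcl⟩ := (hK.prod isCompact_univ).exists_mapClusterPt (f := atTop)
    (u := fun n => (p n, q n, y n)) (tendsto_principal.2 (.of_forall fun n => ⟨hp n, trivial⟩))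
  have hsep' : r ≤ dist (f a b) (f a c) :=
    hcl.rel_of_forall_lt (R := fun x w => r ≤ dist (f x w.1) (f x w.2))
      (fun w => isClosed_le continuous_const ((hfx w.1).dist (hfx w.2)))
      (fun x => isClosed_le continuous_const
        (((hfy x).comp continuous_fst).dist ((hfy x).comp continuous_snd))) hsep
  have hosc' : dist (f a b) (f a c) ≤ s :=
    (hcl.continuousAt_comp continuous_swap.continuousAt).rel_of_forall_lt
      (R := fun w x => dist (f x w.1) (f x w.2) ≤ s)
      (fun x => isClosed_le (((hfy x).comp continuous_fst).dist ((hfy x).comp continuous_snd))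
        continuous_const)
      (fun w => isClosed_le ((hfx w.1).dist (hfx w.2)) continuous_const) hosc
  linarith

def FibersWithin (S : Set (X × Y)) (U₁ : Set X) (W : Set X) (V : Set Y) : Prop :=
  IsOpen W ∧ W.Nonempty ∧ W ⊆ U₁ ∧ IsOpen V ∧ ∀ x ∈ W, Prod.mk x ⁻¹' S ⊆ V

theorem FibersWithin.exists_step [CompactSpace Y] (hfx : ∀ y, Continuous (f · y))
    (hfy : ∀ x, Continuous (f x)) {ε : ℝ} (hε : 0 < ε) {U₁ : Set X} (hU₁ : IsOpen U₁)
    {S : Set (X × Y)} (hS : Minimal (fun T => IsClosed T ∧ closure U₁ ⊆ Prod.fst '' T) S)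
    (hSosc : S ⊆ {p | OscillatesAbove (uncurry f) ε p}) {W : Set X} {V : Set Y}
    (h : FibersWithin S U₁ W V) :
    ∃ W' V', FibersWithin S U₁ W' V' ∧ W' ⊆ W ∧ V' ⊆ V ∧ ∃ p ∈ W, ∃ y ∈ V, ∃ q ∈ V,
      (∀ x ∈ W', ε / 4 < dist (f x q) (f x y)) ∧
      ∀ y₁ ∈ V', ∀ y₂ ∈ V', dist (f p y₁) (f p y₂) ≤ ε / 5 := by
  obtain ⟨hWo, ⟨x₀, hx₀⟩, hWU₁, hVo, hWV⟩ := h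
  have hfiber : ∀ x ∈ W, ∃ y, (x, y) ∈ S := fun x hx => by
    obtain ⟨p, hp, rfl⟩ := hS.1.2 (subset_closure (hWU₁ hx))
    exact ⟨p.2, hp⟩
  obtain ⟨y₀, hy₀⟩ := hfiber x₀ hx₀
  obtain ⟨p, hpW, q, hqV, hsep⟩ := (hSosc hy₀).exists_eventually_lt_dist hfx hε
    (hWo.mem_nhds hx₀) (hVo.mem_nhds (hWV x₀ hx₀ hy₀))
  obtain ⟨W₀, hW₀sep, hW₀, hpW₀⟩ := mem_nhds_iff.1 hsep
  obtain ⟨t, ht⟩ := hfiber p hpW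
  set V₀ := {y | dist (f p y) (f p t) < ε / 10}
  have hV₀ : IsOpen V₀ := isOpen_lt ((hfy p).dist continuous_const) continuous_const
  have htV₀ : t ∈ V₀ := by simp only [V₀, mem_ofPred_eq, dist_self]; positivity
  obtain ⟨O, hOo, hOne, hOsub, hOfib⟩ := hS.exists_isOpen_fiber_subset hU₁ (hWo.inter hW₀)
    (hVo.inter hV₀) ⟨(p, t), ht, ⟨hpW, hpW₀⟩, hWV p hpW ht, htV₀⟩
  refine ⟨O, V ∩ V₀, ⟨hOo, hOne, fun x hx => (hOsub hx).2, hVo.inter hV₀, hOfib⟩,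
    fun x hx => (hOsub hx).1.1, inter_subset_left, p, hpW, y₀, hWV x₀ hx₀ hy₀, q, hqV,
    fun x hx => hW₀sep (hOsub hx).1.2, fun y₁ hy₁ y₂ hy₂ => ?_⟩
  linarith [dist_triangle_right (f p y₁) (f p y₂) (f p t),
    show dist (f p y₁) (f p t) < ε / 10 from hy₁.2, show dist (f p y₂) (f p t) < ε / 10 from hy₂.2]

theorem exists_seq_interleaved_dist_bounds [CompactSpace Y] (hfx : ∀ y, Continuous (f · y))
    (hfy : ∀ x, Continuous (f x)) {ε : ℝ} (hε : 0 < ε) {U₁ : Set X} (hU₁ : IsOpen U₁)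
    (hU₁ne : U₁.Nonempty) {S : Set (X × Y)}
    (hS : Minimal (fun T => IsClosed T ∧ closure U₁ ⊆ Prod.fst '' T) S)
    (hSosc : S ⊆ {p | OscillatesAbove (uncurry f) ε p}) :
    ∃ (p : ℕ → X) (y q : ℕ → Y), (∀ n, p n ∈ U₁) ∧
      (∀ n m, n < m → ε / 4 ≤ dist (f (p m) (q n)) (f (p m) (y n))) ∧
      ∀ n m, n < m → dist (f (p n) (q m)) (f (p n) (y m)) ≤ ε / 5 := by
  obtain ⟨x₀, hx₀⟩ := hU₁ne
  obtain ⟨⟨-, y₀⟩, -⟩ := hS.1.2 (subset_closure hx₀)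
  have : Nonempty X := ⟨x₀⟩
  have : Nonempty Y := ⟨y₀⟩
  choose! W' V' hfib hW' hV' p hp y hy q hq hsep hosc using
    fun W V (hWV : FibersWithin S U₁ W V) => hWV.exists_step hfx hfy hε hU₁ hS hSosc
  set WV : ℕ → Set X × Set Y := fun n => (fun st => (W' st.1 st.2, V' st.1 st.2))^[n] (U₁, univ)
  have hWV_succ : ∀ n, WV (n + 1) = (W' (WV n).1 (WV n).2, V' (WV n).1 (WV n).2) := fun n =>
    iterate_succ_apply' _ _ _
  have hfibers : ∀ n, FibersWithin S U₁ (WV n).1 (WV n).2 := by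
    intro n
    induction n with
    | zero => exact ⟨hU₁, ⟨x₀, hx₀⟩, subset_rfl, isOpen_univ, fun _ _ => subset_univ _⟩
    | succ n ih => rw [hWV_succ]; exact hfib _ _ ih
  have hW : ∀ n m, n < m → (WV m).1 ⊆ W' (WV n).1 (WV n).2 := fun n m hnm => by
    have hanti : Antitone fun n => (WV n).1 := antitone_nat_of_succ_le fun n => by
      rw [hWV_succ]; exact hW' _ _ (hfibers n)
    simpa only [hWV_succ] using hanti (Nat.succ_le_of_lt hnm)
  have hV : ∀ n m, n < m → (WV m).2 ⊆ V' (WV n).1 (WV n).2 := fun n m hnm => by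
    have hanti : Antitone fun n => (WV n).2 := antitone_nat_of_succ_le fun n => by
      rw [hWV_succ]; exact hV' _ _ (hfibers n)
    simpa only [hWV_succ] using hanti (Nat.succ_le_of_lt hnm)
  refine ⟨fun n => p (WV n).1 (WV n).2, fun n => y (WV n).1 (WV n).2,
    fun n => q (WV n).1 (WV n).2, fun n => (hfibers n).2.2.1 (hp _ _ (hfibers n)),
    fun n m hnm => (hsep _ _ (hfibers n) _ (hW n m hnm (hp _ _ (hfibers m)))).le,
    fun n m hnm => hosc _ _ (hfibers n) _ (hV n m hnm (hq _ _ (hfibers m))) _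
      (hV n m hnm (hy _ _ (hfibers m)))⟩

theorem exists_forall_not_oscillatesAbove [LocallyCompactSpace X] [RegularSpace X]
    [CompactSpace Y] (hfx : ∀ y, Continuous (f · y)) (hfy : ∀ x, Continuous (f x)) {U : Set X}
    (hU : IsOpen U) (hne : U.Nonempty) {ε : ℝ} (hε : 0 < ε) :
    ∃ a ∈ U, ∀ y, ¬OscillatesAbove (uncurry f) ε (a, y) := by
  by_contra! h
  obtain ⟨x₀, hx₀⟩ := hne
  obtain ⟨U₁, hU₁, hx₀U₁, hU₁U, hU₁c⟩ :=
    exists_open_between_and_isCompact_closure isCompact_singleton hU (singleton_subset_iff.2 hx₀)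
  obtain ⟨S, hSosc, hS⟩ :=
    (isClosed_setOf_oscillatesAbove (uncurry f) ε).exists_minimal_subset_of_subset_image_fst
      (Q := closure U₁) fun x hx => let ⟨y, hy⟩ := h x (hU₁U hx); ⟨(x, y), hy, rfl⟩
  obtain ⟨p, y, q, hp, hsep, hosc⟩ := exists_seq_interleaved_dist_bounds hfx hfy hε hU₁
    ⟨x₀, hx₀U₁ rfl⟩ hS hSosc
  linarith [le_of_interleaved_dist_bounds hfx hfy hU₁c (fun n => subset_closure (hp n)) hsep hosc]

end Namioka

theorem HasCompactSupport.continuous_onePoint_elim {X M : Type*} [TopologicalSpace X]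
    [TopologicalSpace M] [Zero M] {h : X → M} (hs : HasCompactSupport h) (hc : Continuous h) :
    Continuous fun y : OnePoint X => y.elim 0 h :=
  (OnePoint.continuous_iff _).2
    ⟨tendsto_const_nhds.congr' (hasCompactSupport_iff_eventuallyEq.1 hs).symm, hc⟩

theorem tendsto_inv_nhds_one_of_eventually_mem_isCompact {G : Type*} [Group G]
    [TopologicalSpace G] [ContinuousMul G] [T1Space G] {L : Set G} (hL : IsCompact L)
    (h : ∀ᶠ x in 𝓝 1, x⁻¹ ∈ L) : Tendsto (·⁻¹) (𝓝 (1 : G)) (𝓝 1) := by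
  refine hL.tendsto_nhds_of_unique_mapClusterPt h fun x _ hx => ?_
  by_contra hx1
  have : ∀ᶠ p : G × G in 𝓝 1 ×ˢ 𝓝 x, p.1 * p.2 ≠ 1 := by
    rw [← nhds_prod_eq]
    exact continuous_mul.continuousAt.eventually_ne (by simpa using hx1)
  obtain ⟨pa, hpa, pb, hpb, hp⟩ := eventually_prod_iff.1 this
  obtain ⟨g, hgb, hga⟩ := ((hx.frequently hpb).and_eventually hpa).exists
  exact hp hga hgb (mul_inv_cancel g)

section SemitopologicalGroup

variable {G : Type*} [Group G] [TopologicalSpace G] [SeparatelyContinuousMul G]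
  [LocallyCompactSpace G] [T2Space G]

theorem exists_forall_not_oscillatesAbove_mul {h : G → ℝ} (hc : Continuous h)
    (hs : HasCompactSupport h) {ε : ℝ} (hε : 0 < ε) :
    ∃ a : G, ∀ y : OnePoint G,
      ¬OscillatesAbove (uncurry fun x (y : OnePoint G) => y.elim 0 fun g => h (x * g)) ε
        (a, y) := by
  have hcoe : ∀ y : OnePoint G, Continuous fun x => y.elim 0 fun g => h (x * g) := by
    intro y
    induction y using OnePoint.rec with
    | infty => exact continuous_const
    | coe g => exact hc.comp (continuous_mul_const g)
  obtain ⟨a, -, ha⟩ := exists_forall_not_oscillatesAbove hcoe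
    (fun x => (hs.comp_homeomorph (Homeomorph.mulLeft x)).continuous_onePoint_elim
      (hc.comp (continuous_const_mul x))) isOpen_univ univ_nonempty hε
  exact ⟨a, ha⟩

theorem tendsto_uncurry_mul_nhds_one :
    Tendsto (uncurry ((· * ·) : G → G → G)) (𝓝 1 ×ˢ 𝓝 1) (𝓝 1) := by
  refine fun W hW => ?_
  obtain ⟨h, h1, h0, hs, -⟩ := exists_continuous_one_zero_of_isCompact
    (isCompact_singleton (x := (1 : G))) isOpen_interior.isClosed_compl
    (disjoint_compl_right_iff_subset.2 (singleton_subset_iff.2 (mem_interior_iff_mem_nhds.2 hW)))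
  obtain ⟨a, ha⟩ := exists_forall_not_oscillatesAbove_mul h.continuous hs one_half_pos
  obtain ⟨A, hA, B, hB, hAB⟩ :=
    exists_nhds_dist_le_of_not_oscillatesAbove (ha ((a⁻¹ : G) : OnePoint G))
  have hmem : ∀ x ∈ A, ∀ g : G, (g : OnePoint G) ∈ B → x * g ∈ W := by
    intro x hx g hg
    by_contra hxg
    have hval := hAB x hx g hg
    simp only [OnePoint.elim_some, mul_inv_cancel, h1 (mem_singleton 1),
      h0 (fun hmem => hxg (interior_subset hmem))] at hval
    norm_num at hval
  have hu : ∀ᶠ u in 𝓝 (1 : G), u * a ∈ A := (continuous_mul_const a).tendsto' 1 a (one_mul a) hA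
  have hv : ∀ᶠ v in 𝓝 (1 : G), ((a⁻¹ * v : G) : OnePoint G) ∈ B :=
    (OnePoint.continuous_coe.comp (continuous_const_mul a⁻¹)).tendsto' 1 _ (by simp) hB
  -- `u * v = (u * a) * (a⁻¹ * v)`
  exact (hu.prod_mk hv).mono fun ⟨u, v⟩ ⟨hu, hv⟩ => by simpa [mul_assoc] using hmem _ hu _ hv

theorem exists_isCompact_eventually_inv_mem :
    ∃ L : Set G, IsCompact L ∧ ∀ᶠ x in 𝓝 1, x⁻¹ ∈ L := by
  obtain ⟨h, h1, -, hs, -⟩ := exists_continuous_one_zero_of_isCompact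
    (isCompact_singleton (x := (1 : G))) isClosed_empty (disjoint_empty _)
  obtain ⟨a, ha⟩ := exists_forall_not_oscillatesAbove_mul h.continuous hs one_half_pos
  obtain ⟨A, hA, B, hB, hAB⟩ := exists_nhds_dist_le_of_not_oscillatesAbove (ha OnePoint.infty)
  set L := closure (((↑) : G → OnePoint G) ⁻¹' B)ᶜ
  have hL : IsCompact L := mem_coclosedCompact_iff.1 <| by
    rw [← OnePoint.comap_coe_nhds_infty]
    exact preimage_mem_comap hB
  have hAL : ∀ x ∈ A, x⁻¹ ∈ L := by
    intro x hx
    by_contra hxL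
    have hval :=
      hAB x hx ((x⁻¹ : G) : OnePoint G) (not_not.1 fun hx' => hxL (subset_closure hx'))
    simp only [OnePoint.elim_some, OnePoint.elim_infty, mul_inv_cancel,
      h1 (mem_singleton 1)] at hval
    norm_num at hval
  refine ⟨a • L, hL.smul a, ?_⟩
  filter_upwards [(continuous_mul_const a).tendsto' 1 a (one_mul a) hA] with z hz
  -- `z⁻¹ = a * (z * a)⁻¹`
  exact ⟨(z * a)⁻¹, hAL _ hz, by simp⟩

end SemitopologicalGroup

/-- (Ellis) Every locally compact Hausdorff semitopological group (a group with a
topology in which multiplication is separately continuous) is a topological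
group. -/
theorem topologicalGroup_of_locallyCompact_semitopological {G : Type*} [Group G]
    [TopologicalSpace G] [LocallyCompactSpace G] [T2Space G]
    (hright : ∀ h : G, Continuous fun g : G => g * h)
    (hleft : ∀ h : G, Continuous fun g : G => h * g) :
    IsTopologicalGroup G := by
  have : SeparatelyContinuousMul G := ⟨hleft _, hright _⟩
  have hmul := tendsto_uncurry_mul_nhds_one (G := G)
  have hleft' : ∀ x : G, 𝓝 x = map (x * ·) (𝓝 1) := fun x => by
    simpa using ((Homeomorph.mulLeft x).map_nhds_eq 1).symm
  have hright' : ∀ x : G, 𝓝 x = map (· * x) (𝓝 1) := fun x => by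
    simpa using ((Homeomorph.mulRight x).map_nhds_eq 1).symm
  have : ContinuousMul G := .of_nhds_one hmul hleft' hright'
  obtain ⟨L, hL, hinv⟩ := exists_isCompact_eventually_inv_mem (G := G)
  exact .of_nhds_one' hmul (tendsto_inv_nhds_one_of_eventually_mem_isCompact hL hinv) hleft' hright'
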